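/- arXiv:2111.13555 — 5 statements merged into one kernel-verified Lean document; each statement's English description precedes it below -/
import Mathlib

section
/- In a k-partite k-uniform hypergraph G (vertex set partitioned into parts V_1, …, V_k, each hyperedge containing exactly one vertex from each part), vertex separability implies edge separability: if every pair of distinct vertices in the same part V_i is separable (there exists j ≠ i such that every path between them uses a vertex of V_j), then every pair of distinct hyperedges e, e' is separable (there exists j ∈ [k] such that every path from a vertex of e to a vertex of e' uses a vertex of V_j). -/
/-- A `k`-partite `k`-uniform hypergraph: vertices `V` with parts indexed by `Fin k`,
hyperedges indexed by `E`, each hyperedge selecting exactly one vertex per part. -/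
structure KHypergraph (k : ℕ) (V E : Type) where
  part : V → Fin k
  vert : E → Fin k → V
  hpart : ∀ e i, part (vert e i) = i

namespace KHypergraph

variable {k : ℕ} {V E : Type}

/-- Vertex `v` belongs to hyperedge `e`. -/
def Mem (G : KHypergraph k V E) (v : V) (e : E) : Prop :=
  G.vert e (G.part v) = v

/-- Two vertices are adjacent if they are both contained in a common hyperedge. -/
def Adj (G : KHypergraph k V E) (u v : V) : Prop :=
  ∃ e : E, G.Mem u e ∧ G.Mem v e

/-- `l` is an `s`–`t` path: a nonempty sequence of vertices starting at `s`, ending at `t`,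
with consecutive vertices contained in a common hyperedge. -/
def IsPath (G : KHypergraph k V E) (s t : V) (l : List V) : Prop :=
  l.Chain' G.Adj ∧ l.head? = some s ∧ l.getLast? = some t

/-- Vertex separability: every two distinct vertices of the same part `V_i` can be
separated by removing some part `V_j`, `j ≠ i`. -/
def VertexSeparable (G : KHypergraph k V E) : Prop :=
  ∀ v v' : V, v ≠ v' → G.part v = G.part v' →
    ∃ j : Fin k, j ≠ G.part v ∧
      ∀ l : List V, G.IsPath v v' l → ∃ w ∈ l, G.part w = j

/-- Edge separability: every two distinct hyperedges can be separated by removing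
some part `V_j`. -/
def EdgeSeparable (G : KHypergraph k V E) : Prop :=
  ∀ e e' : E, G.vert e ≠ G.vert e' →
    ∃ j : Fin k, ∀ (v v' : V) (l : List V), G.Mem v e → G.Mem v' e' →
      G.IsPath v v' l → ∃ w ∈ l, G.part w = j

/-- The axis-parallel line in `ℝ^k` representing a vertex `v` of part `i = G.part v`:
all coordinates `j ≠ i` are fixed to `L v j`, coordinate `i` is free. -/
def lineOf (G : KHypergraph k V E) (L : V → Fin k → ℝ) (v : V) : Set (Fin k → ℝ) :=
  {x | ∀ j : Fin k, j ≠ G.part v → x j = L v j}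

/-- `(p, L)` is an axis-parallel point line cover representation of `G` in `ℝ^k`:
hyperedges map to pairwise distinct points, vertices map to pairwise distinct
axis-parallel lines (part `V_i` to direction `i`), and hypergraph incidence coincides
with geometric incidence. -/
def Represents (G : KHypergraph k V E) (p : E → Fin k → ℝ) (L : V → Fin k → ℝ) : Prop :=
  Function.Injective p ∧
  (∀ v v' : V, v ≠ v' → G.lineOf L v ≠ G.lineOf L v') ∧
  (∀ (v : V) (e : E), G.Mem v e ↔ p e ∈ G.lineOf L v)

/-- The auxiliary graph `G_i` on the hyperedges: `e` and `e'` are adjacent iff they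
share a vertex in a part `V_j` with `j ≠ i`. -/
def GiAdj (G : KHypergraph k V E) (i : Fin k) (e e' : E) : Prop :=
  ∃ v : V, G.Mem v e ∧ G.Mem v e' ∧ G.part v ≠ i

end KHypergraph

/-!
Distinct hyperedges `e`, `e'` differ in some part `V_i`; let `V_j` separate their vertices
there. Any `e`–`e'` path, extended at both ends by those two vertices, becomes a path between
them, so it meets `V_j`; the added endpoints lie in `V_i ≠ V_j`, hence the original path does.
-/

namespace KHypergraph

variable {k : ℕ} {V E : Type} (G : KHypergraph k V E)

theorem mem_vert (e : E) (i : Fin k) : G.Mem (G.vert e i) e := by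
  rw [Mem, G.hpart]

variable {G}

theorem IsPath.cons {s u t : V} {l : List V} (hsu : G.Adj s u) (hl : G.IsPath u t l) :
    G.IsPath s t (s :: l) := by
  obtain ⟨hchain, hhead, hlast⟩ := hl
  refine ⟨hchain.cons ?_, rfl, ?_⟩
  · rintro y hy
    rw [hhead, Option.mem_some_iff] at hy
    exact hy ▸ hsu
  · cases l with
    | nil => simp at hhead
    | cons a l => rwa [List.getLast?_cons_cons]

theorem IsPath.concat {s u t : V} {l : List V} (hl : G.IsPath s u l) (hut : G.Adj u t) :
    G.IsPath s t (l ++ [t]) := by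
  obtain ⟨hchain, hhead, hlast⟩ := hl
  refine ⟨hchain.append (.singleton t) ?_, ?_, by simp⟩
  · rintro x hx y hy
    rw [hlast, Option.mem_some_iff] at hx
    rw [List.head?_singleton, Option.mem_some_iff] at hy
    exact hx ▸ hy ▸ hut
  · cases l with
    | nil => simp at hhead
    | cons a l => simpa using hhead

end KHypergraph

/-- In a `k`-partite `k`-uniform hypergraph, vertex separability implies edge
separability. -/
theorem stmt2 {k : ℕ} {V E : Type} (G : KHypergraph k V E)
    (h : G.VertexSeparable) : G.EdgeSeparable := by
  intro e e' hne
  obtain ⟨i, hi⟩ : ∃ i, G.vert e i ≠ G.vert e' i := Function.ne_iff.mp hne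
  obtain ⟨j, hji, hsep⟩ := h _ _ hi (by rw [G.hpart, G.hpart])
  refine ⟨j, fun u u' l hu hu' hl => ?_⟩
  have hpath : G.IsPath (G.vert e i) (G.vert e' i) (G.vert e i :: l ++ [G.vert e' i]) :=
    (hl.cons ⟨e, G.mem_vert e i, hu⟩).concat ⟨e', hu', G.mem_vert e' i⟩
  obtain ⟨w, hw, hwj⟩ := hsep _ hpath
  rw [G.hpart] at hji
  rw [List.cons_append, List.mem_cons, List.mem_append, List.mem_singleton] at hw
  rcases hw with rfl | hw | rfl
  · exact absurd (hwj.symm.trans (G.hpart e i)) hji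
  · exact ⟨w, hw, hwj⟩
  · exact absurd (hwj.symm.trans (G.hpart e' i)) hji
end

section
/- If a k-partite k-uniform hypergraph G is edge-separable, then no two distinct hyperedges of G share two or more vertices. -/
/-- In an edge-separable `k`-hypergraph, no two distinct hyperedges share two or more
vertices. -/
theorem stmt3 {k : ℕ} {V E : Type} (G : KHypergraph k V E)
    (h : G.EdgeSeparable) :
    ∀ e e' : E, G.vert e ≠ G.vert e' →
      ¬ ∃ v v' : V, v ≠ v' ∧ G.Mem v e ∧ G.Mem v e' ∧ G.Mem v' e ∧ G.Mem v' e' := by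
  intro e e' hee
  rintro ⟨v, v', hvv, hve, hve', hv'e, hv'e'⟩
  obtain ⟨j, hj⟩ := h e e' hee
  have path1 : G.IsPath v v [v] := ⟨List.isChain_singleton v, rfl, rfl⟩
  have path2 : G.IsPath v' v' [v'] := ⟨List.isChain_singleton v', rfl, rfl⟩
  obtain ⟨w, hw, hwj⟩ := hj v v [v] hve hve' path1
  obtain ⟨w', hw', hw'j⟩ := hj v' v' [v'] hv'e hv'e' path2
  simp only [List.mem_singleton] at hw hw'
  subst hw hw'
  apply hvv
  rw [← hve, ← hv'e, hwj, hw'j]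
end

section
/- There exists a 3-partite 3-uniform hypergraph that is edge-separable but not vertex-separable. -/
/-! ### Auxiliary construction -/

/-- Vertices of the counterexample. -/
inductive Vt | u1 | u2 | w1 | w2 | w3 | w4 | v | v1 | m | n | a1 | a2 | a3 | a4 | x1 | x2
  deriving DecidableEq

instance : Fintype Vt := ⟨⟨{.u1, .u2, .w1, .w2, .w3, .w4, .v, .v1, .m, .n, .a1, .a2, .a3, .a4, .x1, .x2}, by decide⟩,
  fun x => by cases x <;> decide⟩

/-- Hyperedges of the counterexample. -/
inductive Ed | e0 | e1 | e2 | e3 | e4 | e5 | e6 | e7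
  deriving DecidableEq

instance : Fintype Ed := ⟨⟨{.e0, .e1, .e2, .e3, .e4, .e5, .e6, .e7}, by decide⟩,
  fun x => by cases x <;> decide⟩

open Vt Ed

def pt : Vt → Fin 3
  | u1 | u2 | w1 | w2 | w3 | w4 => 0
  | v | v1 | m | n => 1
  | a1 | a2 | a3 | a4 | x1 | x2 => 2

def vt : Ed → Fin 3 → Vt
  | e0, ⟨0,_⟩ => u1 | e0, ⟨1,_⟩ => v  | e0, ⟨2,_⟩ => a1
  | e1, ⟨0,_⟩ => u1 | e1, ⟨1,_⟩ => m  | e1, ⟨2,_⟩ => a2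
  | e2, ⟨0,_⟩ => u2 | e2, ⟨1,_⟩ => m  | e2, ⟨2,_⟩ => a3
  | e3, ⟨0,_⟩ => u2 | e3, ⟨1,_⟩ => v1 | e3, ⟨2,_⟩ => a4
  | e4, ⟨0,_⟩ => w1 | e4, ⟨1,_⟩ => v  | e4, ⟨2,_⟩ => x1
  | e5, ⟨0,_⟩ => w2 | e5, ⟨1,_⟩ => n  | e5, ⟨2,_⟩ => x1
  | e6, ⟨0,_⟩ => w3 | e6, ⟨1,_⟩ => n  | e6, ⟨2,_⟩ => x2
  | e7, ⟨0,_⟩ => w4 | e7, ⟨1,_⟩ => v1 | e7, ⟨2,_⟩ => x2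
  | _, ⟨i+3,h⟩ => absurd h (by omega)

def HG : KHypergraph 3 Vt Ed := ⟨pt, vt, by decide⟩

/-- Separating part `J` and cut set `S` for each ordered pair of distinct edges. -/
def cut : Ed → Ed → Fin 3 × List Vt
  | .e0, .e1 => (0, [.v, .v1, .n, .a1, .a4, .x1, .x2])
  | .e0, .e2 => (0, [.v, .v1, .n, .a1, .a4, .x1, .x2])
  | .e0, .e3 => (1, [.u1, .a1, .a2])
  | .e0, .e4 => (1, [.u1, .a1, .a2])
  | .e0, .e5 => (1, [.u1, .a1, .a2])
  | .e0, .e6 => (1, [.u1, .a1, .a2])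
  | .e0, .e7 => (1, [.u1, .a1, .a2])
  | .e1, .e0 => (0, [.m, .a2, .a3])
  | .e1, .e2 => (1, [.u1, .a1, .a2])
  | .e1, .e3 => (0, [.m, .a2, .a3])
  | .e1, .e4 => (0, [.m, .a2, .a3])
  | .e1, .e5 => (0, [.m, .a2, .a3])
  | .e1, .e6 => (0, [.m, .a2, .a3])
  | .e1, .e7 => (0, [.m, .a2, .a3])
  | .e2, .e0 => (0, [.m, .a2, .a3])
  | .e2, .e1 => (1, [.u2, .a3, .a4])
  | .e2, .e3 => (0, [.m, .a2, .a3])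
  | .e2, .e4 => (0, [.m, .a2, .a3])
  | .e2, .e5 => (0, [.m, .a2, .a3])
  | .e2, .e6 => (0, [.m, .a2, .a3])
  | .e2, .e7 => (0, [.m, .a2, .a3])
  | .e3, .e0 => (1, [.u2, .a3, .a4])
  | .e3, .e1 => (0, [.v, .v1, .n, .a1, .a4, .x1, .x2])
  | .e3, .e2 => (0, [.v, .v1, .n, .a1, .a4, .x1, .x2])
  | .e3, .e4 => (1, [.u2, .a3, .a4])
  | .e3, .e5 => (1, [.u2, .a3, .a4])
  | .e3, .e6 => (1, [.u2, .a3, .a4])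
  | .e3, .e7 => (1, [.u2, .a3, .a4])
  | .e4, .e0 => (1, [.w1, .w2, .x1])
  | .e4, .e1 => (0, [.v, .v1, .n, .a1, .a4, .x1, .x2])
  | .e4, .e2 => (0, [.v, .v1, .n, .a1, .a4, .x1, .x2])
  | .e4, .e3 => (1, [.w1, .w2, .x1])
  | .e4, .e5 => (2, [.u1, .u2, .w1, .w4, .v, .v1, .m])
  | .e4, .e6 => (1, [.w1, .w2, .x1])
  | .e4, .e7 => (1, [.w1, .w2, .x1])
  | .e5, .e0 => (1, [.w1, .w2, .x1])
  | .e5, .e1 => (0, [.v, .v1, .n, .a1, .a4, .x1, .x2])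
  | .e5, .e2 => (0, [.v, .v1, .n, .a1, .a4, .x1, .x2])
  | .e5, .e3 => (1, [.w1, .w2, .x1])
  | .e5, .e4 => (2, [.w2, .w3, .n])
  | .e5, .e6 => (1, [.w1, .w2, .x1])
  | .e5, .e7 => (1, [.w1, .w2, .x1])
  | .e6, .e0 => (1, [.w3, .w4, .x2])
  | .e6, .e1 => (0, [.v, .v1, .n, .a1, .a4, .x1, .x2])
  | .e6, .e2 => (0, [.v, .v1, .n, .a1, .a4, .x1, .x2])
  | .e6, .e3 => (1, [.w3, .w4, .x2])
  | .e6, .e4 => (1, [.w3, .w4, .x2])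
  | .e6, .e5 => (1, [.w3, .w4, .x2])
  | .e6, .e7 => (2, [.w2, .w3, .n])
  | .e7, .e0 => (1, [.w3, .w4, .x2])
  | .e7, .e1 => (0, [.v, .v1, .n, .a1, .a4, .x1, .x2])
  | .e7, .e2 => (0, [.v, .v1, .n, .a1, .a4, .x1, .x2])
  | .e7, .e3 => (1, [.w3, .w4, .x2])
  | .e7, .e4 => (1, [.w3, .w4, .x2])
  | .e7, .e5 => (1, [.w3, .w4, .x2])
  | .e7, .e6 => (2, [.u1, .u2, .w1, .w4, .v, .v1, .m])
  | _, _ => (0, [])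

/-- If there is a set `S` closed under adjacency (except into part `j`) containing the
head side and avoiding the tail side, then every path crosses part `j`. -/
lemma chain_cross {k : ℕ} {V E : Type} (G : KHypergraph k V E) (j : Fin k) (S : V → Prop)
    (hcl : ∀ x y, S x → G.Adj x y → G.part y = j ∨ S y) :
    ∀ (l : List V) (v' : V), l.Chain' G.Adj → l.getLast? = some v' →
      (∃ x, l.head? = some x ∧ S x) → ¬ S v' → ∃ w ∈ l, G.part w = j := by
  intro l
  induction l with
  | nil => intro v' _ _ hx _; simp at hx
  | cons a t ih =>
    intro v' hch hlast hx hv'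
    obtain ⟨x, hx1, hx2⟩ := hx
    simp at hx1; subst hx1
    cases t with
    | nil =>
      simp [List.getLast?] at hlast; subst hlast; exact absurd hx2 hv'
    | cons b t' =>
      have hadj : G.Adj a b := (List.isChain_cons_cons.mp hch).1
      rcases hcl a b hx2 hadj with hb | hb
      · exact ⟨b, by simp, hb⟩
      · have hch' : (b :: t').Chain' G.Adj := (List.isChain_cons_cons.mp hch).2
        have hlast' : (b :: t').getLast? = some v' := by
          rwa [List.getLast?_cons_cons] at hlast
        obtain ⟨w, hw1, hw2⟩ := ih v' hch' hlast' ⟨b, rfl, hb⟩ hv'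
        exact ⟨w, List.mem_cons_of_mem _ hw1, hw2⟩

instance (v : Vt) (e : Ed) : Decidable (HG.Mem v e) :=
  decidable_of_iff (HG.vert e (HG.part v) = v) Iff.rfl

instance (x y : Vt) : Decidable (HG.Adj x y) :=
  decidable_of_iff (∃ e, HG.Mem x e ∧ HG.Mem y e) Iff.rfl

lemma cut_closed : ∀ (e e' : Ed) (x y : Vt), x ∈ (cut e e').2 → HG.Adj x y →
    HG.part y = (cut e e').1 ∨ y ∈ (cut e e').2 := by decide

lemma cut_mem_left : ∀ (e e' : Ed), e ≠ e' → ∀ x : Vt, HG.Mem x e →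
    HG.part x = (cut e e').1 ∨ x ∈ (cut e e').2 := by decide

lemma cut_mem_right : ∀ (e e' : Ed), e ≠ e' → ∀ x : Vt, HG.Mem x e' →
    HG.part x = (cut e e').1 ∨ x ∉ (cut e e').2 := by decide

/-- There exists a 3-partite 3-uniform hypergraph that is edge-separable but not
vertex-separable. -/
theorem stmt4 :
    ∃ (V E : Type) (G : KHypergraph 3 V E), G.EdgeSeparable ∧ ¬ G.VertexSeparable := by
  refine ⟨Vt, Ed, HG, ?_, ?_⟩
  · intro e e' hne
    have hne' : e ≠ e' := fun h => hne (h ▸ rfl)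
    refine ⟨(cut e e').1, fun a b l ha hb hl => ?_⟩
    rcases cut_mem_left e e' hne' a ha with h | h
    · exact ⟨a, by
        have := hl.2.1
        cases l with
        | nil => simp at this
        | cons c t => simp at this; subst this; exact ⟨by simp, h⟩⟩
    · rcases cut_mem_right e e' hne' b hb with h' | h'
      · refine ⟨b, ?_, h'⟩
        obtain ⟨hne0, rfl⟩ := List.mem_getLast?_eq_getLast hl.2.2
        exact List.getLast_mem hne0
      · exact chain_cross HG (cut e e').1 (· ∈ (cut e e').2)
          (cut_closed e e') l b hl.1 hl.2.2 ⟨a, hl.2.1, h⟩ h'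
  · intro hvs
    obtain ⟨j, hj, hall⟩ := hvs Vt.v Vt.v1 (by decide) (by decide)
    have hpv : HG.part Vt.v = 1 := rfl
    fin_cases j
    · have := hall [Vt.v, Vt.x1, Vt.n, Vt.x2, Vt.v1] (by
        refine ⟨?_, rfl, rfl⟩
        exact List.isChain_cons_cons.mpr ⟨⟨Ed.e4, rfl, rfl⟩, List.isChain_cons_cons.mpr ⟨⟨Ed.e5, rfl, rfl⟩,
          List.isChain_cons_cons.mpr ⟨⟨Ed.e6, rfl, rfl⟩, List.isChain_cons_cons.mpr ⟨⟨Ed.e7, rfl, rfl⟩,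
          List.isChain_singleton _⟩⟩⟩⟩)
      revert this; decide
    · exact hj rfl
    · have := hall [Vt.v, Vt.u1, Vt.m, Vt.u2, Vt.v1] (by
        refine ⟨?_, rfl, rfl⟩
        exact List.isChain_cons_cons.mpr ⟨⟨Ed.e0, rfl, rfl⟩, List.isChain_cons_cons.mpr ⟨⟨Ed.e1, rfl, rfl⟩,
          List.isChain_cons_cons.mpr ⟨⟨Ed.e2, rfl, rfl⟩, List.isChain_cons_cons.mpr ⟨⟨Ed.e3, rfl, rfl⟩,
          List.isChain_singleton _⟩⟩⟩⟩)
      revert this; decide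
end

section
/- Let G = (V_1 ∪ … ∪ V_k, E) be a k-partite k-uniform hypergraph. If G is representable as an axis-parallel point line cover instance in ℝ^k (edges mapped injectively to points, each vertex in V_i mapped injectively to a distinct axis-parallel line in direction i, with v ∈ e iff the line of v contains the point of e), then G is vertex-separable. -/
theorem List.IsChain.apply_eq_of_head?_of_getLast? {α β : Type*} {f : α → β} {l : List α}
    (h : l.IsChain fun a b => f a = f b) {s t : α} (hs : l.head? = some s)
    (ht : l.getLast? = some t) : f s = f t := by
  refine h.induction (fun x => f s = f x) l (fun _ _ hxy hx => hx.trans hxy) (fun hne => ?_) t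
    (List.mem_of_getLast? ht)
  rw [(List.head_eq_iff_head?_eq_some hne).mpr hs]

namespace KHypergraph

variable {k : ℕ} {V E : Type} (G : KHypergraph k V E) {p : E → Fin k → ℝ} {L : V → Fin k → ℝ}

theorem exists_coord_ne_of_lineOf_ne {v v' : V} (hpart : G.part v = G.part v')
    (h : G.lineOf L v ≠ G.lineOf L v') : ∃ j, j ≠ G.part v ∧ L v j ≠ L v' j := by
  contrapose! h
  ext x
  simp only [lineOf, Set.mem_ofPred_eq, ← hpart]
  exact forall₂_congr fun j hj => by rw [h j hj]

theorem coord_eq_of_adj (hinc : ∀ v e, G.Mem v e → p e ∈ G.lineOf L v) {u w : V} {j : Fin k}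
    (hadj : G.Adj u w) (hu : G.part u ≠ j) (hw : G.part w ≠ j) : L u j = L w j := by
  obtain ⟨e, hue, hwe⟩ := hadj
  exact (hinc u e hue j hu.symm).symm.trans (hinc w e hwe j hw.symm)

theorem coord_eq_of_isPath (hinc : ∀ v e, G.Mem v e → p e ∈ G.lineOf L v) {s t : V}
    {l : List V} {j : Fin k} (hl : G.IsPath s t l) (havoid : ∀ w ∈ l, G.part w ≠ j) :
    L s j = L t j := by
  obtain ⟨hchain, hs, ht⟩ := hl
  refine List.IsChain.apply_eq_of_head?_of_getLast? (f := fun v => L v j) ?_ hs ht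
  exact List.IsChain.imp_of_mem_imp
    (fun a b ha hb hab => G.coord_eq_of_adj hinc hab (havoid a ha) (havoid b hb)) hchain

end KHypergraph

/-- If a `k`-partite `k`-uniform hypergraph is representable as an axis-parallel point
line cover instance in `ℝ^k`, then it is vertex-separable. -/
theorem stmt6 {k : ℕ} {V E : Type} (G : KHypergraph k V E)
    (p : E → Fin k → ℝ) (L : V → Fin k → ℝ) (hrep : G.Represents p L) :
    G.VertexSeparable := by
  obtain ⟨-, hlines, hinc⟩ := hrep
  intro v v' hne hpart
  obtain ⟨j, hjv, hLj⟩ := G.exists_coord_ne_of_lineOf_ne hpart (hlines v v' hne)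
  refine ⟨j, hjv, fun l hl => ?_⟩
  by_contra! havoid
  exact hLj (G.coord_eq_of_isPath (fun v e => (hinc v e).mp) hl havoid)
end

section
/- Vertex separability implies edge separability for (d, ℓ)-hypergraphs: let G be a binom(d, ℓ)-partite uniform hypergraph with parts V_I indexed by ℓ-element subsets I of [d]. If for every part V_I and every two distinct v, v' ∈ V_I there exists j ∈ [d] \ I such that every v–v' path contains a vertex in some part V_J with j ∈ J, then for every two distinct hyperedges e, e' there exists j ∈ [d] such that every e–e' path contains a vertex in some part V_J with j ∈ J. -/
/-- A `binom(d,ℓ)`-partite uniform hypergraph: parts indexed by the `ℓ`-element subsets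
of `[d]`, each hyperedge containing exactly one vertex of each part. -/
structure DLHypergraph (d l : ℕ) (V E : Type) where
  part : V → {I : Finset (Fin d) // I.card = l}
  vert : E → {I : Finset (Fin d) // I.card = l} → V
  hpart : ∀ e I, part (vert e I) = I

namespace DLHypergraph

variable {d l : ℕ} {V E : Type}

/-- Vertex `v` belongs to hyperedge `e`. -/
def Mem (G : DLHypergraph d l V E) (v : V) (e : E) : Prop :=
  G.vert e (G.part v) = v

/-- Two vertices are adjacent if they are both contained in a common hyperedge. -/
def Adj (G : DLHypergraph d l V E) (u v : V) : Prop :=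
  ∃ e : E, G.Mem u e ∧ G.Mem v e

/-- `l` is an `s`–`t` path. -/
def IsPath (G : DLHypergraph d l V E) (s t : V) (L : List V) : Prop :=
  L.Chain' G.Adj ∧ L.head? = some s ∧ L.getLast? = some t

/-- Vertex separability: for distinct `v, v'` in the same part `V_I` there is a
coordinate `j ∉ I` such that every `v`–`v'` path contains a vertex in some part `V_J`
with `j ∈ J`. -/
def VertexSeparable (G : DLHypergraph d l V E) : Prop :=
  ∀ v v' : V, v ≠ v' → G.part v = G.part v' →
    ∃ j : Fin d, j ∉ (G.part v).val ∧
      ∀ L : List V, G.IsPath v v' L → ∃ w ∈ L, j ∈ (G.part w).val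

/-- Edge separability: for distinct hyperedges `e, e'` there is a coordinate `j` such
that every `e`–`e'` path contains a vertex in some part `V_J` with `j ∈ J`. -/
def EdgeSeparable (G : DLHypergraph d l V E) : Prop :=
  ∀ e e' : E, G.vert e ≠ G.vert e' →
    ∃ j : Fin d, ∀ (v v' : V) (L : List V), G.Mem v e → G.Mem v' e' →
      G.IsPath v v' L → ∃ w ∈ L, j ∈ (G.part w).val

/-- The axis-aligned affine `ℓ`-subspace of `ℝ^d` representing vertex `v`: coordinates
in the free set `G.part v` are free, all other coordinates are fixed to values of `C v`. -/
def subspaceOf (G : DLHypergraph d l V E) (C : V → Fin d → ℝ) (v : V) : Set (Fin d → ℝ) :=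
  {x | ∀ j : Fin d, j ∉ (G.part v).val → x j = C v j}

/-- `(p, C)` is a point subspace cover representation of `G` in `ℝ^d`: hyperedges map
to pairwise distinct points, vertices to pairwise distinct axis-aligned `ℓ`-subspaces
(part `V_I` to subspaces with free coordinate set `I`), preserving and reflecting
incidence. -/
def Represents (G : DLHypergraph d l V E) (p : E → Fin d → ℝ) (C : V → Fin d → ℝ) : Prop :=
  Function.Injective p ∧
  (∀ v v' : V, v ≠ v' → G.subspaceOf C v ≠ G.subspaceOf C v') ∧
  (∀ (v : V) (e : E), G.Mem v e ↔ p e ∈ G.subspaceOf C v)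

end DLHypergraph

/-!
If `e ≠ e'`, they differ in some part `V_I`. Vertex separability applied to the two vertices
`e_I ≠ e'_I` gives a coordinate `j ∉ I` hit by every `e_I`–`e'_I` path. Any path from a vertex of
`e` to a vertex of `e'` extends, through `e_I` and `e'_I`, to such a path, and the vertex it
contains in a part `V_J ∋ j` cannot be one of the two added endpoints, whose part is `I`.
-/

theorem List.IsChain.cons_append_singleton {α : Type*} {R : α → α → Prop} {L : List α}
    {a b x y : α} (hL : L.IsChain R) (ha : L.head? = some a) (hb : L.getLast? = some b)
    (hx : R x a) (hy : R b y) : (x :: (L ++ [y])).IsChain R :=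
  (hL.append (.singleton y) (by simp [hb, hy])).cons (by simp [List.head?_append, ha, hx])

namespace DLHypergraph

variable {d l : ℕ} {V E : Type} (G : DLHypergraph d l V E)

theorem mem_vert (e : E) (I : {I : Finset (Fin d) // I.card = l}) : G.Mem (G.vert e I) e := by
  rw [Mem, G.hpart]

variable {G}

theorem IsPath.cons_append_singleton {s t v v' : V} {L : List V} (hL : G.IsPath s t L)
    (hs : G.Adj v s) (ht : G.Adj t v') : G.IsPath v v' (v :: (L ++ [v'])) :=
  ⟨List.IsChain.cons_append_singleton hL.1 hL.2.1 hL.2.2 hs ht, rfl,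
    by rw [← List.cons_append, List.getLast?_concat]⟩

end DLHypergraph

theorem stmt10_general {d l : ℕ} {V E : Type}
    (G : DLHypergraph d l V E) (h : G.VertexSeparable) : G.EdgeSeparable := by
  intro e e' hne
  obtain ⟨I, hI⟩ := Function.ne_iff.mp hne
  obtain ⟨j, hjI, hsep⟩ := h _ _ hI (by rw [G.hpart, G.hpart])
  rw [G.hpart] at hjI
  refine ⟨j, fun u u' L hu hu' hL => ?_⟩
  obtain ⟨w, hw, hjw⟩ := hsep _ <|
    hL.cons_append_singleton ⟨e, G.mem_vert e I, hu⟩ ⟨e', hu', G.mem_vert e' I⟩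
  rw [List.mem_cons, List.mem_append, List.mem_singleton] at hw
  rcases hw with rfl | hw | rfl
  · exact absurd (G.hpart e I ▸ hjw) hjI
  · exact ⟨w, hw, hjw⟩
  · exact absurd (G.hpart e' I ▸ hjw) hjI

/-- For `(d,ℓ)`-hypergraphs with `ℓ ≤ d − 1`, vertex separability implies edge
separability. -/
theorem stmt10 {d l : ℕ} {V E : Type} (hl : l ≤ d - 1)
    (G : DLHypergraph d l V E) (h : G.VertexSeparable) : G.EdgeSeparable :=
  stmt10_general G h
end
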